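/- Let G be a group with surjective marking μ : Ã* → G (A finite), let 𝒫 be a finite peripheral structure on G consisting of finitely generated subgroups, and assume G is weakly relatively hyperbolic relative to 𝒫, i.e. there exists δ ≥ 0 such that the relative word metric d(x, y) = |x⁻¹y|_{A∪B} on G satisfies the Gromov four-point condition d(x, y) + d(z, w) ≤ max(d(x, z) + d(y, w), d(x, w) + d(y, z)) + 2δ for all x, y, z, w ∈ G. Let H ≤ G be a relatively quasi-convex subgroup which is peripherally finitely generated, i.e. H ∩ P^g is finitely generated for every P ∈ 𝒫 and every g ∈ G. Then H is finitely generated. -/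
import Mathlib


open List

/-- A word over the alphabet Ã = A ∪ A⁻¹ is a `List (A × Bool)`: the letter `(a, true)`
stands for `a` and `(a, false)` for the formal inverse `a⁻¹`. A word is *reduced* if it
has no factor `a·a⁻¹` or `a⁻¹·a`. -/
def Reduced {A : Type*} (w : List (A × Bool)) : Prop :=
  w.Chain' fun p q => ¬(p.1 = q.1 ∧ q.2 = !p.2)

variable {A : Type*} [Fintype A] {G : Type*} [Group G]

/-- Evaluation in `G` of a word over Ã, determined by the images `f a` of the letters.
This is the (inverse-respecting) monoid homomorphism μ : Ã* → G. -/
def eval (f : A → G) (w : List (A × Bool)) : G :=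
  (w.map fun p => if p.2 then f p.1 else (f p.1)⁻¹).prod

/-- Word length of `g ∈ G` with respect to the generators `A`:
the least length of a word over Ã mapping onto `g`. -/
noncomputable def wlen (f : A → G) (g : G) : ℕ :=
  sInf {n | ∃ w : List (A × Bool), eval f w = g ∧ w.length = n}

/-- A rational structure: `L` is a regular language of reduced words with μ(L) = G. -/
def RationalStructure (f : A → G) (L : Set (List (A × Bool))) : Prop :=
  Language.IsRegular (L : Language (A × Bool)) ∧ (∀ w ∈ L, Reduced w) ∧
    ∀ g : G, ∃ w ∈ L, eval f w = g

/-- `H` is L-quasi-convex with constant `k`: for every `w ∈ L` with `μ(w) ∈ H` and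
every prefix `u` of `w`, there is `h ∈ H` with `|h⁻¹ μ(u)| ≤ k`. -/
def QCW (f : A → G) (L : Set (List (A × Bool))) (H : Subgroup G) (k : ℕ) : Prop :=
  ∀ w ∈ L, eval f w ∈ H → ∀ u, u <+: w → ∃ h ∈ H, wlen f (h⁻¹ * eval f u) ≤ k

/-- The set of right cosets `H·μ(u)` where `u` ranges over prefixes of words
`w ∈ L` with `μ(w) ∈ H` (the vertex set of the Stallings graph Γ_L(H)). -/
def VL (f : A → G) (L : Set (List (A × Bool))) (H : Subgroup G) : Set (Set G) :=
  {S | ∃ w ∈ L, eval f w ∈ H ∧ ∃ u, u <+: w ∧ S = {x | ∃ h ∈ H, x = h * eval f u}}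

/-- The conjugate subgroup H^g = g⁻¹Hg. -/
def conjG {G : Type*} [Group G] (H : Subgroup G) (g : G) : Subgroup G :=
  Subgroup.map ((MulAut.conj g⁻¹).toMonoidHom) H

/-- B = ⋃_{P ∈ PS} (P \ {1}): the nontrivial peripheral elements, used as letters. -/
def periB {G : Type*} [Group G] (PS : Finset (Subgroup G)) : Set G :=
  ⋃ P ∈ PS, ((P : Set G) \ {1})

/-- Evaluation in G of a relative word, i.e. a word over the alphabet Ã ⊔ B. -/
def reval (f : A → G) (PS : Finset (Subgroup G))
    (w : List ((A × Bool) ⊕ (periB PS))) : G :=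
  (w.map (Sum.elim (fun p : A × Bool => if p.2 then f p.1 else (f p.1)⁻¹) (fun b : periB PS => (b : G)))).prod

/-- Relative word length |g|_{A∪B}: least length of a relative word evaluating to g. -/
noncomputable def rellen (f : A → G) (PS : Finset (Subgroup G)) (g : G) : ℕ :=
  sInf {n | ∃ w : List ((A × Bool) ⊕ (periB PS)), reval f PS w = g ∧ w.length = n}

/-- H is relatively quasi-convex with constant k: for every h ∈ H, every relative
geodesic for h and every prefix u of it, some h' ∈ H satisfies |h'⁻¹·(value of u)|_A ≤ k. -/
def RelQCW (f : A → G) (PS : Finset (Subgroup G)) (H : Subgroup G) (k : ℕ) : Prop :=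
  ∀ h ∈ H, ∀ w : List ((A × Bool) ⊕ (periB PS)),
    reval f PS w = h → w.length = rellen f PS h →
    ∀ u, u <+: w → ∃ h' ∈ H, wlen f (h'⁻¹ * reval f PS u) ≤ k

section AuxLemmas
set_option linter.unusedSectionVars false

lemma eval_append (f : A → G) (u v : List (A × Bool)) :
    eval f (u ++ v) = eval f u * eval f v := by
  simp [eval]

def invWord {A : Type*} (w : List (A × Bool)) : List (A × Bool) :=
  (w.map fun p => (p.1, !p.2)).reverse

lemma eval_invWord (f : A → G) (w : List (A × Bool)) :
    eval f (invWord w) = (eval f w)⁻¹ := by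
  induction w with
  | nil => simp [invWord, eval]
  | cons p w ih =>
      have : invWord (p :: w) = invWord w ++ [(p.1, !p.2)] := by simp [invWord]
      rw [this, eval_append, ih]
      have : eval f (p :: w) = (if p.2 then f p.1 else (f p.1)⁻¹) * eval f w := by
        simp [eval]
      rw [this]
      cases p.2 <;> simp [eval, mul_assoc]

lemma wlen_le_of_eval (f : A → G) {w : List (A × Bool)} {g : G} (h : eval f w = g) :
    wlen f g ≤ w.length := Nat.sInf_le ⟨w, h, rfl⟩

lemma wlen_spec (f : A → G) (hsurj : Function.Surjective (eval f)) (g : G) :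
    ∃ w : List (A × Bool), eval f w = g ∧ w.length = wlen f g := by
  have hne : {n | ∃ w : List (A × Bool), eval f w = g ∧ w.length = n}.Nonempty := by
    obtain ⟨w, hw⟩ := hsurj g
    exact ⟨w.length, w, hw, rfl⟩
  exact Nat.sInf_mem hne

lemma wlen_mul_le (f : A → G) (hsurj : Function.Surjective (eval f)) (g₁ g₂ : G) :
    wlen f (g₁ * g₂) ≤ wlen f g₁ + wlen f g₂ := by
  obtain ⟨w₁, e₁, l₁⟩ := wlen_spec f hsurj g₁
  obtain ⟨w₂, e₂, l₂⟩ := wlen_spec f hsurj g₂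
  calc wlen f (g₁ * g₂) ≤ (w₁ ++ w₂).length := wlen_le_of_eval f (by rw [eval_append, e₁, e₂])
  _ = wlen f g₁ + wlen f g₂ := by simp [l₁, l₂]

lemma wlen_inv_le (f : A → G) (hsurj : Function.Surjective (eval f)) (g : G) :
    wlen f g⁻¹ ≤ wlen f g := by
  obtain ⟨w, e, l⟩ := wlen_spec f hsurj g
  calc wlen f g⁻¹ ≤ (invWord w).length := wlen_le_of_eval f (by rw [eval_invWord, e])
  _ = wlen f g := by simp [invWord, l]

lemma reval_append (f : A → G) (PS : Finset (Subgroup G))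
    (u v : List ((A × Bool) ⊕ (periB PS))) :
    reval f PS (u ++ v) = reval f PS u * reval f PS v := by
  simp [reval]

lemma reval_map_inl (f : A → G) (PS : Finset (Subgroup G)) (w : List (A × Bool)) :
    reval f PS (w.map Sum.inl) = eval f w := by
  simp [reval, eval, Function.comp]

end AuxLemmas

/-- if G is weakly relatively hyperbolic relative to a finite peripheral
structure PS of finitely generated subgroups (the relative word metric satisfies the
Gromov four-point condition for some δ), and H is a relatively quasi-convex subgroup
which is peripherally finitely generated (H ∩ P^g is f.g. for all P ∈ PS, g ∈ G),
then H is finitely generated. -/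

theorem stmt17 (f : A → G) (hsurj : Function.Surjective (eval f))
    (PS : Finset (Subgroup G)) (hPfg : ∀ P ∈ PS, Subgroup.FG P)
    (hweakhyp : ∃ δ : ℕ, ∀ x y z w : G,
      rellen f PS (x⁻¹ * y) + rellen f PS (z⁻¹ * w) ≤
        max (rellen f PS (x⁻¹ * z) + rellen f PS (y⁻¹ * w))
            (rellen f PS (x⁻¹ * w) + rellen f PS (y⁻¹ * z)) + 2 * δ)
    (H : Subgroup G) (hqc : ∃ k, RelQCW f PS H k)
    (hperifg : ∀ P ∈ PS, ∀ g : G, (H ⊓ conjG P g).FG) :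
    H.FG := by
  classical
  obtain ⟨k, hk⟩ := hqc
  set ball : Set G := {g : G | wlen f g ≤ k} with hballdef
  have ballfin : ball.Finite := by
    refine (Set.Finite.image (eval f) (List.finite_length_le (A × Bool) k)).subset ?_
    intro g hg
    obtain ⟨w, e, l⟩ := wlen_spec f hsurj g
    exact ⟨w, by rw [Set.mem_setOf_eq, l]; exact hg, e⟩
  have T1fin : {g : G | g ∈ H ∧ wlen f g ≤ 2 * k + 1}.Finite := by
    refine (Set.Finite.image (eval f) (List.finite_length_le (A × Bool) (2 * k + 1))).subset ?_
    intro g hg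
    obtain ⟨w, e, l⟩ := wlen_spec f hsurj g
    exact ⟨w, by rw [Set.mem_setOf_eq, l]; exact hg.2, e⟩
  have hgen : ∀ P : Subgroup G, ∀ x : G, ∃ S : Set G, S.Finite ∧
      (P ∈ PS → Subgroup.closure S = H ⊓ conjG P x⁻¹) := by
    intro P x
    by_cases hP : P ∈ PS
    · obtain ⟨S, hc, hf⟩ := (Subgroup.fg_iff _).mp (hperifg P hP x⁻¹)
      exact ⟨S, hf, fun _ => hc⟩
    · exact ⟨∅, Set.finite_empty, fun h => absurd h hP⟩
  choose gen genfin genclos using hgen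
  set CS : Subgroup G → G → G → Set G :=
    fun P x y => {g : G | g ∈ H ∧ ∃ p ∈ P, g = x * p * y⁻¹} with hCSdef
  set rep : Subgroup G → G → G → Set G := fun P x y =>
    if h : (CS P x y).Nonempty then {h.choose} else ∅ with hrepdef
  have repfin : ∀ P x y, (rep P x y).Finite := by
    intro P x y; rw [hrepdef]; dsimp only; split <;> simp
  have repsub : ∀ P x y, rep P x y ⊆ CS P x y := by
    intro P x y g hg
    rw [hrepdef] at hg; dsimp only at hg
    split at hg
    · next h => rw [Set.mem_singleton_iff] at hg; exact hg ▸ h.choose_spec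
    · exact absurd hg (Set.notMem_empty g)
  set T : Set G := {g : G | g ∈ H ∧ wlen f g ≤ 2 * k + 1} ∪
      ⋃ P ∈ (PS : Set (Subgroup G)), ⋃ x ∈ ball, ⋃ y ∈ ball, (gen P x ∪ rep P x y) with hTdef
  have Tfin : T.Finite := by
    refine T1fin.union ?_
    refine Set.Finite.biUnion PS.finite_toSet fun P _ => ?_
    refine Set.Finite.biUnion ballfin fun x _ => ?_
    refine Set.Finite.biUnion ballfin fun y _ => ?_
    exact (genfin P x).union (repfin P x y)
  have TsubH : T ⊆ (H : Set G) := by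
    intro g hg
    rcases hg with hg | hg
    · exact hg.1
    · simp only [Set.mem_iUnion] at hg
      obtain ⟨P, hP, x, _, y, _, hg⟩ := hg
      rcases hg with hg | hg
      · have : g ∈ Subgroup.closure (gen P x) := Subgroup.subset_closure hg
        rw [genclos P x hP] at this
        exact this.1
      · exact (repsub P x y hg).1
  rw [Subgroup.fg_iff]
  refine ⟨T, le_antisymm ((Subgroup.closure_le H).mpr TsubH) ?_, Tfin⟩
  intro h hH
  have hne : {n | ∃ w : List ((A × Bool) ⊕ (periB PS)),
      reval f PS w = h ∧ w.length = n}.Nonempty := by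
    obtain ⟨w, hw⟩ := hsurj h
    exact ⟨(w.map Sum.inl).length, w.map Sum.inl, by rw [reval_map_inl, hw], rfl⟩
  obtain ⟨w, hw, hlen⟩ := Nat.sInf_mem hne
  have hQC := hk h hH w hw hlen
  have key : ∀ i : ℕ, i ≤ w.length → ∀ h' ∈ H,
      wlen f (h'⁻¹ * reval f PS (w.take i)) ≤ k → h' ∈ Subgroup.closure T := by
    intro i
    induction i with
    | zero =>
      intro _ h' hh' hb
      apply Subgroup.subset_closure
      left
      refine ⟨hh', ?_⟩
      have h1 : wlen f h'⁻¹ ≤ k := by simpa [reval] using hb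
      have h2 : wlen f h'⁻¹⁻¹ ≤ wlen f h'⁻¹ := wlen_inv_le f hsurj h'⁻¹
      rw [inv_inv] at h2
      omega
    | succ i ih =>
      intro hi h' hh' hb
      have hiw : i < w.length := Nat.lt_of_succ_le hi
      obtain ⟨h₀, hh₀, hb₀⟩ := hQC (w.take i) (List.take_prefix i w)
      have hcl₀ : h₀ ∈ Subgroup.closure T := ih (le_of_lt hiw) h₀ hh₀ hb₀
      set x : G := h₀⁻¹ * reval f PS (w.take i) with hxdef
      set y : G := h'⁻¹ * reval f PS (w.take (i + 1)) with hydef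
      set b : G := Sum.elim (fun p : A × Bool => if p.2 then f p.1 else (f p.1)⁻¹)
        (fun q : periB PS => (q : G)) (w[i]'hiw) with hbdef
      have hrev : reval f PS (w.take (i + 1)) = reval f PS (w.take i) * b := by
        rw [← List.take_concat_get' w i hiw, reval_append]
        congr 1
        simp [reval, hbdef]
      have hxy : h₀⁻¹ * h' = x * b * y⁻¹ := by
        rw [hxdef, hydef, hrev]
        group
      have hg : h₀⁻¹ * h' ∈ H := mul_mem (inv_mem hh₀) hh'
      have step : h₀⁻¹ * h' ∈ Subgroup.closure T := by
        rcases hℓ : (w[i]'hiw) with p | q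
        · -- letter from Ã
          have hbl : wlen f b ≤ 1 := by
            refine wlen_le_of_eval f (w := [p]) ?_
            simp [eval, hbdef, hℓ]
          have hbound : wlen f (x * b * y⁻¹) ≤ 2 * k + 1 := by
            have h1 := wlen_mul_le f hsurj (x * b) y⁻¹
            have h2 := wlen_mul_le f hsurj x b
            have h3 := wlen_inv_le f hsurj y
            have hxk : wlen f x ≤ k := hb₀
            have hyk : wlen f y ≤ k := hb
            omega
          have hbound' : wlen f (h₀⁻¹ * h') ≤ 2 * k + 1 := by rw [hxy]; exact hbound
          exact Subgroup.subset_closure (Or.inl ⟨hg, hbound'⟩)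
        · -- peripheral letter
          have hbq : b = (q : G) := by rw [hbdef, hℓ]; rfl
          obtain ⟨P, hP, hqP⟩ := Set.mem_iUnion₂.mp q.2
          have hqmem : (q : G) ∈ P := hqP.1
          have hCSg : (h₀⁻¹ * h') ∈ CS P x y := ⟨hg, q, hqmem, by rw [hxy, hbq]⟩
          have hCSne : (CS P x y).Nonempty := ⟨_, hCSg⟩
          have hrepeq : rep P x y = {hCSne.choose} := by rw [hrepdef]; exact dif_pos hCSne
          obtain ⟨hcH, p, hpP, hceq⟩ := hCSne.choose_spec
          set c : G := hCSne.choose with hcdef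
          have hcT : c ∈ T := by
            refine Or.inr ?_
            simp only [Set.mem_iUnion]
            exact ⟨P, hP, x, hb₀, y, hb, Or.inr (by rw [hrepeq]; exact rfl)⟩
          have hconj : (h₀⁻¹ * h') * c⁻¹ ∈ H ⊓ conjG P x⁻¹ := by
            refine Subgroup.mem_inf.mpr ⟨?_, ?_⟩
            · exact mul_mem hg (inv_mem hcH)
            · refine Subgroup.mem_map.mpr ⟨(q : G) * p⁻¹, mul_mem hqmem (inv_mem hpP), ?_⟩
              simp only [MulEquiv.coe_toMonoidHom, MulAut.conj_apply, inv_inv]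
              rw [hxy, hbq, hceq]
              group
          have hconj' : (h₀⁻¹ * h') * c⁻¹ ∈ Subgroup.closure T := by
            have := (genclos P x hP) ▸ hconj
            exact Subgroup.closure_mono (fun g hg' => by
              refine Or.inr ?_
              simp only [Set.mem_iUnion]
              exact ⟨P, hP, x, hb₀, y, hb, Or.inl hg'⟩) this
          have : (h₀⁻¹ * h') = ((h₀⁻¹ * h') * c⁻¹) * c := by group
          rw [this]
          exact mul_mem hconj' (Subgroup.subset_closure hcT)
      have : h' = h₀ * (h₀⁻¹ * h') := by group
      rw [this]
      exact mul_mem hcl₀ step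
  obtain ⟨h', hh', hb'⟩ := hQC w List.prefix_rfl
  have hcl' : h' ∈ Subgroup.closure T := by
    refine key w.length le_rfl h' hh' ?_
    rwa [List.take_length]
  have htail : h'⁻¹ * h ∈ Subgroup.closure T := by
    apply Subgroup.subset_closure
    left
    refine ⟨mul_mem (inv_mem hh') hH, ?_⟩
    rw [hw] at hb'
    exact le_trans hb' (by omega)
  have : h = h' * (h'⁻¹ * h) := by group
  rw [this]
  exact mul_mem hcl' htail
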